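/- arXiv:1106.2275 — 2 statements merged into one kernel-verified Lean document; each statement's English description precedes it below -/
import Mathlib

section
/- Let B > 0 and let k, d, t, L0, l^max be nonnegative integers with t ≥ 1, l^max ≤ t − 1, and (d − L0) − k + (t − l^max) > 0. If β satisfies (B/k)/((d−L0)−k+t) ≤ β ≤ (B/k)/((d−L0)−k+(t−l^max)) and β′ = (B/k − (d − L0 − (k−1))β)/(t − l_{k−1} − 1) for some 0 ≤ l_{k−1} ≤ l^max with t − l_{k−1} − 1 > 0, then (B/k)(t − l^max − 1)/((d − L0 − k + t − l^max)(t − 1)) ≤ β′ ≤ (B/k)(t − 1)/((d − L0 − k + t)(t − l^max − 1)). -/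
set_option maxHeartbeats 1000000 in
/-- Two-sided bound on the collaboration bandwidth `β'` at the MSR point with
selfish nodes. -/
theorem stmt3 (B : ℝ) (hB : 0 < B) (k d t L0 lmax lk1 : ℕ)
    (hk : 1 ≤ k) (ht : 1 ≤ t) (hlk1 : lk1 ≤ lmax) (hlmax : lmax ≤ t - 1)
    (hdk : (k : ℝ) ≤ (d : ℝ) - L0)
    (hden1 : 0 < (d : ℝ) - L0 - k + ((t : ℝ) - lmax))
    (hden2 : 0 < (t : ℝ) - lk1 - 1)
    (hden3 : 0 < (t : ℝ) - lmax - 1)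
    (β β' : ℝ)
    (hβlo : (B / k) / ((d : ℝ) - L0 - k + t) ≤ β)
    (hβhi : β ≤ (B / k) / ((d : ℝ) - L0 - k + ((t : ℝ) - lmax)))
    (hβ' : β' = (B / k - ((d : ℝ) - L0 - (k - 1)) * β) / ((t : ℝ) - lk1 - 1)) :
    (B / k) * ((t : ℝ) - lmax - 1) /
        (((d : ℝ) - L0 - k + t - lmax) * ((t : ℝ) - 1)) ≤ β' ∧
    β' ≤ (B / k) * ((t : ℝ) - 1) /
        (((d : ℝ) - L0 - k + t) * ((t : ℝ) - lmax - 1)) := by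
  have hk0 : (0:ℝ) < k := by exact_mod_cast hk
  have hb : 0 < B / k := div_pos hB hk0
  have hlm0 : (0:ℝ) ≤ lmax := Nat.cast_nonneg _
  have hlk0 : (0:ℝ) ≤ lk1 := Nat.cast_nonneg _
  have hlk1' : (lk1:ℝ) ≤ lmax := by exact_mod_cast hlk1
  have ht1 : 0 < (t:ℝ) - 1 := by linarith
  have hAt : 0 < (d:ℝ) - L0 - k + t := by linarith
  -- clear the divisions in the β bounds
  have hhi : β * ((d:ℝ) - L0 - k + ((t:ℝ) - lmax)) ≤ B / k :=
    (le_div_iff₀ hden1).mp hβhi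
  have hlo : B / k ≤ β * ((d:ℝ) - L0 - k + t) :=
    (div_le_iff₀ hAt).mp hβlo
  have hβpos : 0 < β := lt_of_lt_of_le (div_pos hb hAt) hβlo
  set N : ℝ := B / k - ((d:ℝ) - L0 - (k - 1)) * β with hN
  clear_value N
  have hA1 : (0:ℝ) ≤ (d:ℝ) - L0 - (k - 1) := by linarith
  have hNlo : (B / k) * ((t:ℝ) - lmax - 1) ≤ N * ((d:ℝ) - L0 - k + ((t:ℝ) - lmax)) := by
    nlinarith [mul_le_mul_of_nonneg_left hhi hA1]
  have hNhi : N * ((d:ℝ) - L0 - k + t) ≤ (B / k) * ((t:ℝ) - 1) := by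
    nlinarith [mul_le_mul_of_nonneg_left hlo hA1]
  have hNpos : 0 ≤ N := by
    have h := mul_pos hden3 hβpos
    rw [hN]; nlinarith [hhi, h]
  constructor
  · rw [hβ', div_le_div_iff₀ (by nlinarith) hden2]
    have h1 := mul_le_mul_of_nonneg_right hNlo hden2.le
    have h2 := mul_nonneg (mul_nonneg hNpos hden1.le) hlk0
    nlinarith [h1, h2]
  · rw [hβ', div_le_div_iff₀ hden2 (by positivity)]
    nlinarith [mul_le_mul_of_nonneg_right hNhi hden3.le,
      mul_nonneg (mul_nonneg hb.le ht1.le) (by linarith : (0:ℝ) ≤ (lmax:ℝ) - lk1)]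
end

section
/- At the minimum bandwidth regeneration (MBR) point of collaborative regenerating codes with parameters B, k, d, t (with 2d − k + t > 0), taking α = (B/k)(2d + t − 1)/(2d − k + t), β = (B/k)·2/(2d − k + t), β′ = (B/k)/(2d − k + t), the cut value ∑_{i=0}^{k−1} min(α, (d−i)β + (t−1)β′) equals B. -/
/-- The MBR point values achieve the min-cut constraint with equality:
`∑_{i<k} min(α, (d−i)β + (t−1)β') = B`. -/
theorem stmt7 (B : ℝ) (hB : 0 < B) (k d t : ℕ)
    (hk : 1 ≤ k) (ht : 1 ≤ t) (hdk : k ≤ d)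
    (hden : 0 < 2 * (d : ℝ) - k + t)
    (α β β' : ℝ)
    (hα : α = (B / k) * (2 * (d : ℝ) + t - 1) / (2 * (d : ℝ) - k + t))
    (hβ : β = (B / k) * 2 / (2 * (d : ℝ) - k + t))
    (hβ' : β' = (B / k) / (2 * (d : ℝ) - k + t)) :
    ∑ i ∈ Finset.range k,
        min α (((d : ℝ) - i) * β + ((t : ℝ) - 1) * β') = B := by
  have hkR : (0:ℝ) < k := by exact_mod_cast hk
  have hBk : 0 < B / k := div_pos hB hkR
  have key : ∀ i ∈ Finset.range k,
      min α (((d : ℝ) - i) * β + ((t : ℝ) - 1) * β')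
        = (B / k) * (2 * ((d : ℝ) - i) + t - 1) / (2 * (d : ℝ) - k + t) := by
    intro i hi
    have hterm : ((d : ℝ) - i) * β + ((t : ℝ) - 1) * β'
        = (B / k) * (2 * ((d : ℝ) - i) + t - 1) / (2 * (d : ℝ) - k + t) := by
      rw [hβ, hβ']; field_simp; ring
    rw [hterm, min_eq_right]
    rw [hα]
    have hi0 : (0:ℝ) ≤ i := by positivity
    gcongr
    nlinarith
  rw [Finset.sum_congr rfl key]
  have hsum : ∀ n : ℕ, ∑ i ∈ Finset.range n, (2 * ((d : ℝ) - i) + t - 1)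
      = n * (2 * (d : ℝ) - n + t) := by
    intro n
    induction n with
    | zero => simp
    | succ m ih =>
      rw [Finset.sum_range_succ, ih]
      push_cast
      ring
  have heq : ∑ i ∈ Finset.range k, (B / k) * (2 * ((d : ℝ) - i) + t - 1) / (2 * (d : ℝ) - k + t)
      = (B / k) * (∑ i ∈ Finset.range k, (2 * ((d : ℝ) - i) + t - 1)) / (2 * (d : ℝ) - k + t) := by
    simp only [div_eq_mul_inv, ← Finset.sum_mul, ← Finset.mul_sum]
  rw [heq, hsum]
  field_simp
end
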